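/- Suppose assumptions (A1) and (A2) hold. Then there exists a constant C > 0, depending only on γ, α, the constants C1, C2, C3, C̃1, C̃2, C̃3 of (A1)–(A2), and on sup|V|, such that for every 0 < ε ≤ 1 and every solution (u, m) of Problem 1, the following energy estimate holds: ∫₀¹ m^{α+1} dx + ∫₀¹ |u'|^γ (1 + m) dx + ε ∫₀¹ (u² + m² + (u')² + (m')²) dx ≤ C. -/

import Mathlib

/-!
Multiply the first equation by `m - 1` and the second by `-u` and add: after integrating by
parts over a period, all second-order terms become squares or cancel, which gives the energy
identity
`∫ (m^(α+1) + ε (u² + m² + u'² + m'²) + m (u' H'(u') - H(u')) + H(u'))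
  = ∫ (m^α + ε m - (m - 1) V)`.
By (A2) and (A1) the last two terms on the left dominate `m |u'|^γ` and `|u'|^γ` up to
multiples of `m` and constants, and Young's inequality absorbs `m^α` and the terms linear in
`m` into `m^(α+1) / 2`.
-/

open Set intervalIntegral

noncomputable section

/-- `f : ℝ → ℝ` is ½-Hölder continuous: there is `K ≥ 0` with
`|f x - f y| ≤ K * |x - y| ^ (1/2)` for all `x y`. -/
def IsHolderHalf (f : ℝ → ℝ) : Prop :=
  ∃ K : ℝ, 0 ≤ K ∧ ∀ x y : ℝ, |f x - f y| ≤ K * |x - y| ^ ((1 : ℝ) / 2)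

/-- `f` is a 1-periodic function of class `C²` (a `C²` function on the torus `𝕋`). -/
def MemC2T (f : ℝ → ℝ) : Prop :=
  Function.Periodic f 1 ∧ ContDiff ℝ 2 f

/-- `f ∈ C^{2,1/2}(𝕋)`: 1-periodic, of class `C²`, with ½-Hölder continuous
second derivative. -/
def MemC2HalfT (f : ℝ → ℝ) : Prop :=
  MemC2T f ∧ IsHolderHalf (deriv (deriv f))

/-- `(u, m)` is a solution of Problem 1 with Hamiltonian `H`, potential `V`,
exponent `α` and parameter `ε`: `u, m` are 1-periodic `C²` functions, `m > 0`
everywhere, and the system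
`u - u'' + H(u') + V = m^α + ε (m - m'')`,
`m - m'' - (H'(u') m)' = 1 - ε (u - u'')`
holds pointwise. -/
def SolvesMFG (H V : ℝ → ℝ) (α ε : ℝ) (u m : ℝ → ℝ) : Prop :=
  MemC2T u ∧ MemC2T m ∧ (∀ x, 0 < m x) ∧
  (∀ x : ℝ, u x - deriv (deriv u) x + H (deriv u x) + V x
      = m x ^ α + ε * (m x - deriv (deriv m) x)) ∧
  (∀ x : ℝ, m x - deriv (deriv m) x
      - deriv (fun y => deriv H (deriv u y) * m y) x
      = 1 - ε * (u x - deriv (deriv u) x))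

open Function

theorem Function.Periodic.deriv {𝕜 F : Type*} [NontriviallyNormedField 𝕜] [NormedAddCommGroup F]
    [NormedSpace 𝕜 F] {f : 𝕜 → F} {c : 𝕜} (hf : Periodic f c) : Periodic (deriv f) c :=
  fun x => by rw [← deriv_comp_add_const, hf.funext]

theorem Function.Periodic.intervalIntegral_eq_zero_of_hasDerivAt {E : Type*}
    [NormedAddCommGroup E] [NormedSpace ℝ E] [CompleteSpace E] {f f' : ℝ → E} {c : ℝ}
    (hf : Periodic f c) (hderiv : ∀ x, HasDerivAt f (f' x) x)
    (hint : IntervalIntegrable f' MeasureTheory.volume 0 c) :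
    ∫ x in (0 : ℝ)..c, f' x = 0 := by
  rw [integral_eq_sub_of_hasDerivAt (fun x _ => hderiv x) hint, sub_eq_zero]
  simpa using hf 0

theorem exists_rpow_le_mul_rpow_add {a β δ : ℝ} (hβ : 0 ≤ β) (hβa : β < a) (hδ : 0 < δ) :
    ∃ K, 0 ≤ K ∧ ∀ t, 0 ≤ t → t ^ β ≤ δ * t ^ a + K := by
  set T := δ⁻¹ ^ (a - β)⁻¹
  have hT : 0 < T := by positivity
  refine ⟨T ^ β, by positivity, fun t ht => ?_⟩
  rcases le_or_gt t T with htT | hTt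
  · have := Real.rpow_le_rpow ht htT hβ
    have : 0 ≤ δ * t ^ a := by positivity
    linarith
  · -- above the threshold `T`, where `δ T ^ (a - β) = 1`, the power `t ^ a` dominates
    have ht : 0 < t := hT.trans hTt
    have hTa : δ * T ^ (a - β) = 1 := by
      rw [Real.rpow_inv_rpow (inv_nonneg.mpr hδ.le) (sub_pos.mpr hβa).ne', mul_inv_cancel₀ hδ.ne']
    have hsplit : t ^ a = t ^ β * t ^ (a - β) := by
      rw [← Real.rpow_add ht, add_sub_cancel]
    have hmono : T ^ (a - β) ≤ t ^ (a - β) := Real.rpow_le_rpow hT.le hTt.le (by linarith)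
    have : 0 ≤ T ^ β := by positivity
    calc t ^ β = t ^ β * (δ * T ^ (a - β)) := by rw [hTa, mul_one]
      _ ≤ t ^ β * (δ * t ^ (a - β)) := by gcongr
      _ ≤ δ * t ^ a + T ^ β := by rw [hsplit]; linarith

theorem exists_energy_density_lower_bound {α γ C1 C2 tC1 tC2 KV : ℝ} (hα : 0 < α)
    (hC1 : 0 < C1) (hC2 : 0 < C2) (htC1 : 0 < tC1) (htC2 : 0 < tC2) :
    ∃ c > 0, ∃ M > 0, ∀ p h h' t v ε q : ℝ,
      -C1 + C2 * |p| ^ γ ≤ h → -tC1 + tC2 * |p| ^ γ ≤ p * h' - h →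
      0 < t → |v| ≤ KV → 0 < ε → ε ≤ 1 → 0 ≤ q →
      c * (t ^ (α + 1) + |p| ^ γ * (1 + t) + ε * q) ≤
        t ^ (α + 1) - t ^ α - (t - 1) * v - ε * t + ε * q + t * (p * h' - h) + h + M := by
  set b := tC1 + 1 + |KV|
  have hb : 0 < b := by positivity
  obtain ⟨K₁, hK₁, hpow_α⟩ :=
    exists_rpow_le_mul_rpow_add hα.le (lt_add_one α) (by norm_num : (0 : ℝ) < 1 / 4)
  obtain ⟨K₂, hK₂, hpow_one⟩ :=
    exists_rpow_le_mul_rpow_add zero_le_one (by linarith : (1 : ℝ) < α + 1) (by positivity :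
      0 < 1 / (4 * b))
  set c := min (1 / 2) (min tC2 C2)
  refine ⟨c, by positivity, K₁ + b * K₂ + C1 + |KV|, by positivity, ?_⟩
  intro p h h' t v ε q hH hL ht hv hε hε1 hq
  set P := |p| ^ γ
  have hP : 0 ≤ P := by positivity
  have hLt : t * (-tC1 + tC2 * P) ≤ t * (p * h' - h) := mul_le_mul_of_nonneg_left hL ht.le
  have hv_le : (t - 1) * v ≤ (t + 1) * |KV| :=
    calc (t - 1) * v ≤ |t - 1| * |v| := by rw [← abs_mul]; exact le_abs_self _
      _ ≤ (t + 1) * |KV| :=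
        mul_le_mul (abs_sub_le_iff.mpr ⟨by linarith, by linarith⟩) (hv.trans (le_abs_self KV))
          (abs_nonneg v) (by linarith)
  have hmα := hpow_α t ht.le
  have hm_lin : b * t ≤ 1 / 4 * t ^ (α + 1) + b * K₂ := by
    have := mul_le_mul_of_nonneg_left (hpow_one t ht.le) hb.le
    rw [Real.rpow_one] at this
    field_simp at this ⊢
    linarith
  have hεt : ε * t ≤ t := mul_le_of_le_one_left ht.le hε1
  have hc_le : c * (t ^ (α + 1) + P * (1 + t) + ε * q) ≤
      1 / 2 * t ^ (α + 1) + tC2 * (t * P) + C2 * P + ε * q := by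
    have h1 : c ≤ 1 / 2 := min_le_left _ _
    have h2 : c ≤ tC2 := (min_le_right _ _).trans (min_le_left _ _)
    have h3 : c ≤ C2 := (min_le_right _ _).trans (min_le_right _ _)
    have : 0 ≤ t ^ (α + 1) := by positivity
    have : 0 ≤ ε * q := by positivity
    have : 0 ≤ t * P := by positivity
    nlinarith
  linarith

theorem MemC2T.hasDerivAt {f : ℝ → ℝ} (hf : MemC2T f) (x : ℝ) : HasDerivAt f (deriv f x) x :=
  (hf.2.differentiable two_ne_zero x).hasDerivAt

theorem MemC2T.contDiff_deriv {f : ℝ → ℝ} (hf : MemC2T f) : ContDiff ℝ 1 (deriv f) :=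
  hf.2.deriv' (n := 1)

theorem MemC2T.hasDerivAt_deriv {f : ℝ → ℝ} (hf : MemC2T f) (x : ℝ) :
    HasDerivAt (deriv f) (deriv (deriv f) x) x :=
  (hf.contDiff_deriv.differentiable one_ne_zero x).hasDerivAt

def mfgEnergyDensity (α γ ε : ℝ) (u m : ℝ → ℝ) (x : ℝ) : ℝ :=
  m x ^ (α + 1) + |deriv u x| ^ γ * (1 + m x)
    + ε * (u x ^ 2 + m x ^ 2 + deriv u x ^ 2 + deriv m x ^ 2)

/-- Up to the derivative of a 1-periodic function, this is `m - 1` times the first equation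
of `SolvesMFG` minus `u` times the second. -/
def energyIdentityIntegrand (H V : ℝ → ℝ) (α ε : ℝ) (u m : ℝ → ℝ) (x : ℝ) : ℝ :=
  m x ^ (α + 1) - m x ^ α - (m x - 1) * V x - ε * m x
    + ε * (u x ^ 2 + m x ^ 2 + deriv u x ^ 2 + deriv m x ^ 2)
    + m x * (deriv u x * deriv H (deriv u x) - H (deriv u x)) + H (deriv u x)

namespace SolvesMFG

variable {H V : ℝ → ℝ} {α γ ε : ℝ} {u m : ℝ → ℝ}

theorem continuous_rpow (hsol : SolvesMFG H V α ε u m) (p : ℝ) : Continuous fun x => m x ^ p :=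
  hsol.2.1.2.continuous.rpow_const fun x => Or.inl (hsol.2.2.1 x).ne'

theorem exists_periodic_hasDerivAt_energyIdentityIntegrand (hsol : SolvesMFG H V α ε u m)
    (hH : ContDiff ℝ 2 H) :
    ∃ F : ℝ → ℝ, Periodic F 1 ∧ ∀ x, HasDerivAt F (energyIdentityIntegrand H V α ε u m x) x := by
  obtain ⟨hu, hm, hm_pos, hHJ, hFP⟩ := hsol
  set g := fun y => deriv H (deriv u y) * m y with hg
  refine ⟨fun x => -(deriv u x * (m x - 1)) + u x * deriv m x + u x * g x
      + ε * (deriv m x * (m x - 1)) + ε * (u x * deriv u x), fun x => ?_, fun x => ?_⟩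
  · simp only [hu.1 x, hm.1 x, hu.1.deriv x, hm.1.deriv x, hg]
  · have hg' : HasDerivAt g (deriv g x) x :=
      (((hH.deriv' (n := 1)).comp hu.contDiff_deriv).mul (hm.2.of_le (by norm_num))
        |>.differentiable one_ne_zero x).hasDerivAt
    refine (((((hu.hasDerivAt_deriv x).mul ((hm.hasDerivAt x).sub_const 1)).neg.add
      ((hu.hasDerivAt x).mul (hm.hasDerivAt_deriv x))).add ((hu.hasDerivAt x).mul hg')).add
      (((hm.hasDerivAt_deriv x).mul ((hm.hasDerivAt x).sub_const 1)).const_mul ε)).add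
      (((hu.hasDerivAt x).mul (hu.hasDerivAt_deriv x)).const_mul ε) |>.congr_deriv ?_
    have hpow : m x ^ (α + 1) = m x ^ α * m x := Real.rpow_add_one (hm_pos x).ne' α
    unfold energyIdentityIntegrand
    linear_combination (m x - 1) * hHJ x - u x * hFP x - hpow

theorem continuous_energyIdentityIntegrand (hsol : SolvesMFG H V α ε u m)
    (hH : ContDiff ℝ 2 H) (hV : Continuous V) :
    Continuous (energyIdentityIntegrand H V α ε u m) := by
  have := hsol.continuous_rpow (α + 1)
  have := hsol.continuous_rpow α
  obtain ⟨hu, hm, -⟩ := hsol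
  have := hu.2.continuous
  have := hm.2.continuous
  have := hu.2.continuous_deriv one_le_two
  have := hm.2.continuous_deriv one_le_two
  have := hH.continuous
  have := hH.continuous_deriv one_le_two
  unfold energyIdentityIntegrand
  fun_prop

theorem intervalIntegral_energyIdentityIntegrand (hsol : SolvesMFG H V α ε u m)
    (hH : ContDiff ℝ 2 H) (hV : Continuous V) :
    ∫ x in (0 : ℝ)..1, energyIdentityIntegrand H V α ε u m x = 0 := by
  obtain ⟨F, hF_per, hF⟩ := hsol.exists_periodic_hasDerivAt_energyIdentityIntegrand hH
  exact hF_per.intervalIntegral_eq_zero_of_hasDerivAt hF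
    ((hsol.continuous_energyIdentityIntegrand hH hV).intervalIntegrable 0 1)

theorem continuous_mfgEnergyDensity (hsol : SolvesMFG H V α ε u m) (hγ : 0 ≤ γ) :
    Continuous (mfgEnergyDensity α γ ε u m) := by
  have := hsol.continuous_rpow (α + 1)
  obtain ⟨hu, hm, -⟩ := hsol
  have := hu.2.continuous
  have := hm.2.continuous
  have := hu.2.continuous_deriv one_le_two
  have := hm.2.continuous_deriv one_le_two
  unfold mfgEnergyDensity
  fun_prop (disch := exact hγ)

theorem intervalIntegral_mfgEnergyDensity (hsol : SolvesMFG H V α ε u m) (hγ : 0 ≤ γ) :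
    ∫ x in (0 : ℝ)..1, mfgEnergyDensity α γ ε u m x =
      (∫ x in (0 : ℝ)..1, m x ^ (α + 1)) + (∫ x in (0 : ℝ)..1, |deriv u x| ^ γ * (1 + m x))
        + ε * ∫ x in (0 : ℝ)..1, (u x ^ 2 + m x ^ 2 + deriv u x ^ 2 + deriv m x ^ 2) := by
  have hpow : Continuous fun x => m x ^ (α + 1) := hsol.continuous_rpow _
  obtain ⟨hu, hm, -⟩ := hsol
  have := hu.2.continuous
  have := hm.2.continuous
  have := hu.2.continuous_deriv one_le_two
  have := hm.2.continuous_deriv one_le_two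
  have hlag : Continuous fun x => |deriv u x| ^ γ * (1 + m x) := by fun_prop (disch := exact hγ)
  have hquad : Continuous fun x => ε * (u x ^ 2 + m x ^ 2 + deriv u x ^ 2 + deriv m x ^ 2) := by
    fun_prop
  unfold mfgEnergyDensity
  rw [integral_add ((hpow.fun_add hlag).intervalIntegrable 0 1) (hquad.intervalIntegrable 0 1),
    integral_add (hpow.intervalIntegrable 0 1) (hlag.intervalIntegrable 0 1), integral_const_mul]

end SolvesMFG

theorem energy_estimate
    (α γ C1 C2 C3 tC1 tC2 tC3 KV : ℝ)
    (hα : 0 < α) (hγ : 1 < γ)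
    (hC1 : 0 < C1) (hC2 : 0 < C2)
    (htC1 : 0 < tC1) (htC2 : 0 < tC2) :
    ∃ C > 0, ∀ H V : ℝ → ℝ, ContDiff ℝ 2 H → Continuous V →
      Function.Periodic V 1 → (∀ x, |V x| ≤ KV) →
      (∀ p : ℝ, -C1 + C2 * |p| ^ γ ≤ H p ∧ H p ≤ C1 + C3 * |p| ^ γ) →
      (∀ p : ℝ, -tC1 + tC2 * |p| ^ γ ≤ p * deriv H p - H p ∧
          p * deriv H p - H p ≤ tC1 + tC3 * |p| ^ γ) →
      ∀ ε : ℝ, 0 < ε → ε ≤ 1 → ∀ u m : ℝ → ℝ, SolvesMFG H V α ε u m →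
        (∫ x in (0:ℝ)..1, m x ^ (α + 1))
          + (∫ x in (0:ℝ)..1, |deriv u x| ^ γ * (1 + m x))
          + ε * (∫ x in (0:ℝ)..1,
              ((u x) ^ 2 + (m x) ^ 2 + (deriv u x) ^ 2 + (deriv m x) ^ 2)) ≤ C := by
  obtain ⟨c, hc, M, hM, hbound⟩ :=
    exists_energy_density_lower_bound (γ := γ) (KV := KV) hα hC1 hC2 htC1 htC2
  refine ⟨M / c, div_pos hM hc, fun H V hH hV _ hVK hA1 hA2 ε hε hε1 u m hsol => ?_⟩
  have hpointwise (x : ℝ) :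
      c * mfgEnergyDensity α γ ε u m x ≤ energyIdentityIntegrand H V α ε u m x + M :=
    hbound _ _ _ _ _ _ _ (hA1 _).1 (hA2 _).1 (hsol.2.2.1 x) (hVK x) hε hε1 (by positivity)
  have hD := hsol.continuous_energyIdentityIntegrand hH hV
  have hE := hsol.continuous_mfgEnergyDensity (zero_le_one.trans hγ.le)
  rw [← hsol.intervalIntegral_mfgEnergyDensity (zero_le_one.trans hγ.le), le_div_iff₀' hc,
    ← integral_const_mul]
  calc ∫ x in (0 : ℝ)..1, c * mfgEnergyDensity α γ ε u m x
      ≤ ∫ x in (0 : ℝ)..1, (energyIdentityIntegrand H V α ε u m x + M) :=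
        integral_mono_on zero_le_one ((continuous_const.mul hE).intervalIntegrable 0 1)
          ((hD.add continuous_const).intervalIntegrable 0 1) fun x _ => hpointwise x
    _ = M := by
      rw [integral_add (hD.intervalIntegrable 0 1) intervalIntegrable_const,
        hsol.intervalIntegral_energyIdentityIntegrand hH hV]
      simp
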